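/- arXiv:math/0409607 — 4 statements merged into one kernel-verified Lean document; each statement's English description precedes it below -/
import Mathlib

section
/- Let G be a finite group and let (ρ, V) be an irreducible 2-dimensional complex representation of G. Then Ad⁰(ρ) is reducible (i.e., the space sl(V) of trace-zero endomorphisms of V has a G-invariant subspace other than 0 and sl(V)) if and only if there exists a group homomorphism α : G → ℂˣ with α ≠ 1 such that α ⊗ ρ ≅ ρ. Moreover, when such an α exists, the one-dimensional representation α is isomorphic to a subrepresentation of Ad⁰(ρ). -/
/-!
If `ρ g ∘ f ∘ ρ g⁻¹ = α g • f` for all `g`, then `f` intertwines `α ⊗ ρ` with `ρ`. For `f ≠ 0` its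
kernel is stable, so irreducibility makes `f` an isomorphism, and Schur's lemma forces `α ≠ 1`
once `tr f = 0`. Conversely, conjugation by `ρ g` multiplies an isomorphism `α ⊗ ρ ≅ ρ` by `α g`
without changing its trace, so it has trace zero when `α ≠ 1` and spans a stable line in `sl(V)`.
It remains to find a stable line in a reducible `Ad⁰(ρ)`: a stable plane `W ⊆ sl(V)` does not
contain `1`, and the orthogonal of `W ⊕ ℂ·1` for the nondegenerate conjugation-invariant form
`tr (f ∘ g)` on `End V` is a stable line in `sl(V)`.
-/

open LinearMap Module

namespace Module.End

variable (k V : Type*) [Field k] [AddCommGroup V] [Module k V]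

noncomputable def traceForm : LinearMap.BilinForm k (Module.End k V) :=
  (LinearMap.mul k (Module.End k V)).compr₂ (trace k V)

variable {k V}

@[simp]
theorem traceForm_apply (f g : Module.End k V) : traceForm k V f g = trace k V (f * g) := rfl

theorem traceForm_nondegenerate [FiniteDimensional k V] : (traceForm k V).Nondegenerate := by
  have separating (f : Module.End k V) (hf : ∀ g, trace k V (f * g) = 0) : f = 0 := by
    ext v
    by_contra hv
    obtain ⟨φ, hφ⟩ := Projective.exists_dual_eq_one k hv
    have : f * φ.smulRight v = φ.smulRight (f v) := by ext; simp
    simpa [this, hφ] using hf (φ.smulRight v)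
  exact ⟨separating, fun g hg => separating g fun f => by simpa [trace_mul_comm] using hg f⟩

end Module.End

namespace LinearMap

variable {k V : Type*} [Field k] [AddCommGroup V] [Module k V]

theorem trace_surjective [FiniteDimensional k V] [Nontrivial V] :
    Function.Surjective (trace k V) := fun c => by
  obtain ⟨v, hv⟩ := exists_ne (0 : V)
  obtain ⟨φ, hφ⟩ := Projective.exists_dual_eq_one k hv
  exact ⟨c • φ.smulRight v, by simp [hφ]⟩

theorem finrank_ker_trace [FiniteDimensional k V] [Nontrivial V] :
    finrank k (ker (trace k V)) = finrank k V ^ 2 - 1 := by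
  have := (trace k V).finrank_range_add_finrank_ker
  rw [range_eq_top.mpr trace_surjective, finrank_top, finrank_self, finrank_linearMap] at this
  rw [sq]
  omega

end LinearMap

namespace Representation

variable {k G : Type*} [Field k] [Group G]

theorem exists_monoidHom_of_forall_mem_span_singleton {M : Type*} [AddCommGroup M] [Module k M]
    (σ : Representation k G M) {m : M} (hm : m ≠ 0) (h : ∀ g, σ g m ∈ k ∙ m) :
    ∃ χ : G →* kˣ, ∀ g, σ g m = (χ g : k) • m := by
  choose c hc using fun g => Submodule.mem_span_singleton.mp (h g)
  have inj := smul_left_injective k hm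
  let χ : G →* k :=
    { toFun := c
      map_one' := inj (by dsimp only; rw [hc, map_one, Module.End.one_apply, one_smul])
      map_mul' := fun g g' => inj (by
        dsimp only
        rw [hc, map_mul, Module.End.mul_apply, ← hc g', map_smul, ← hc g, smul_smul, mul_comm]) }
  exact ⟨χ.toHomUnits, fun g => (hc g).symm⟩

theorem exists_monoidHom_of_finrank_eq_one {M : Type*} [AddCommGroup M] [Module k M]
    (σ : Representation k G M) {U : Submodule k M} (hU1 : finrank k U = 1)
    (hU : ∀ g, ∀ m ∈ U, σ g m ∈ U) :
    ∃ m ∈ U, m ≠ 0 ∧ ∃ χ : G →* kˣ, ∀ g, σ g m = (χ g : k) • m := by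
  obtain ⟨⟨m, hmU⟩, hm0, hspan⟩ := finrank_eq_one_iff'.mp hU1
  have hm0 : m ≠ 0 := by simpa using hm0
  refine ⟨m, hmU, hm0, σ.exists_monoidHom_of_forall_mem_span_singleton hm0 fun g => ?_⟩
  obtain ⟨c, hc⟩ := hspan ⟨σ g m, hU g m hmU⟩
  exact Submodule.mem_span_singleton.mpr ⟨c, congr_arg Subtype.val hc⟩

variable {V : Type*} [AddCommGroup V] [Module k V] (ρ : Representation k G V)

theorem twist_intertwines_iff_conj_eq_smul (α : G →* kˣ) (f : V →ₗ[k] V) :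
    (∀ g v, f ((α g : k) • ρ g v) = ρ g (f v)) ↔ ∀ g, ρ g ∘ₗ f ∘ₗ ρ g⁻¹ = (α g : k) • f := by
  refine ⟨fun h g => ext fun v => ?_, fun h g v => ?_⟩
  · simp [← h g (ρ g⁻¹ v)]
  · simpa using congr($(h g) (ρ g v)).symm

theorem trace_conj [FiniteDimensional k V] (g : G) (f : V →ₗ[k] V) :
    trace k V (ρ g ∘ₗ f ∘ₗ ρ g⁻¹) = trace k V f := by
  rw [← trace_comp_comm', comp_assoc]
  congr 1
  ext; simp

theorem trace_eq_zero_of_conj_eq_smul [FiniteDimensional k V] {α : G →* kˣ} (hα : α ≠ 1)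
    {f : V →ₗ[k] V} (hf : ∀ g, ρ g ∘ₗ f ∘ₗ ρ g⁻¹ = (α g : k) • f) : trace k V f = 0 := by
  obtain ⟨g, hg⟩ := DFunLike.ne_iff.mp hα
  have : (α g : k) * trace k V f = trace k V f := by
    rw [← smul_eq_mul, ← map_smul, ← hf, trace_conj]
  by_contra h
  exact hg (Units.val_eq_one.mp (mul_eq_right₀ h |>.mp this))

theorem exists_eq_smul_one_of_intertwines [IsAlgClosed k] [FiniteDimensional k V] [Nontrivial V]
    (hirr : ∀ W : Submodule k V, (∀ g : G, ∀ v ∈ W, ρ g v ∈ W) → W = ⊥ ∨ W = ⊤)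
    {f : V →ₗ[k] V} (hf : ∀ g v, f (ρ g v) = ρ g (f v)) : ∃ μ : k, f = μ • 1 := by
  obtain ⟨μ, hμ⟩ := Module.End.exists_eigenvalue f
  have hstable : ∀ g, ∀ v ∈ Module.End.eigenspace f μ, ρ g v ∈ Module.End.eigenspace f μ :=
    fun g v hv => by
      rw [Module.End.mem_eigenspace_iff] at hv ⊢
      rw [hf, hv, map_smul]
  obtain h | h := hirr _ hstable
  · exact absurd h hμ
  · exact ⟨μ, ext fun v => by simpa using Module.End.mem_eigenspace_iff.mp (h ▸ Submodule.mem_top)⟩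

theorem bijective_of_conj_eq_smul [FiniteDimensional k V]
    (hirr : ∀ W : Submodule k V, (∀ g : G, ∀ v ∈ W, ρ g v ∈ W) → W = ⊥ ∨ W = ⊤)
    {α : G →* kˣ} {f : V →ₗ[k] V} (hf0 : f ≠ 0) (hf : ∀ g, ρ g ∘ₗ f ∘ₗ ρ g⁻¹ = (α g : k) • f) :
    Function.Bijective f := by
  have hint := (ρ.twist_intertwines_iff_conj_eq_smul α f).mpr hf
  have hstable : ∀ g, ∀ v ∈ ker f, ρ g v ∈ ker f := fun g v hv => by
    rw [mem_ker] at hv ⊢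
    simpa [hv] using hint g v
  obtain h | h := hirr _ hstable
  · exact ⟨ker_eq_bot.mp h, injective_iff_surjective.mp (ker_eq_bot.mp h)⟩
  · exact absurd (ker_eq_top.mp h) hf0

theorem ne_one_of_conj_eq_smul [IsAlgClosed k] [CharZero k] [FiniteDimensional k V] [Nontrivial V]
    (hirr : ∀ W : Submodule k V, (∀ g : G, ∀ v ∈ W, ρ g v ∈ W) → W = ⊥ ∨ W = ⊤)
    {α : G →* kˣ} {f : V →ₗ[k] V} (hf0 : f ≠ 0) (htr : trace k V f = 0)
    (hf : ∀ g, ρ g ∘ₗ f ∘ₗ ρ g⁻¹ = (α g : k) • f) : α ≠ 1 := by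
  rintro rfl
  obtain ⟨μ, rfl⟩ := ρ.exists_eq_smul_one_of_intertwines hirr fun g v => by
    simpa using (ρ.twist_intertwines_iff_conj_eq_smul 1 f).mpr hf g v
  have : μ * finrank k V = 0 := by simpa using htr
  simp [finrank_pos.ne'] at this
  exact hf0 (by simp [this])

theorem exists_conj_eq_smul_of_twist_equiv [FiniteDimensional k V] [Nontrivial V]
    {α : G →* kˣ} (hα : α ≠ 1)
    (hT : ∃ T : V ≃ₗ[k] V, ∀ (g : G) (v : V), T ((α g : k) • ρ g v) = ρ g (T v)) :
    ∃ f : V →ₗ[k] V, f ∈ ker (trace k V) ∧ f ≠ 0 ∧ ∀ g, ρ g ∘ₗ f ∘ₗ ρ g⁻¹ = (α g : k) • f := by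
  obtain ⟨T, hT⟩ := hT
  have hconj := (ρ.twist_intertwines_iff_conj_eq_smul α T).mp hT
  obtain ⟨v, hv⟩ := exists_ne (0 : V)
  exact ⟨T, ρ.trace_eq_zero_of_conj_eq_smul hα hconj, fun h => hv (T.map_eq_zero_iff.mp
    congr($h v)), hconj⟩

open Module.End in
theorem conj_mem_orthogonal_traceForm [FiniteDimensional k V] {S : Submodule k (Module.End k V)}
    (hS : ∀ g, ∀ f ∈ S, ρ g ∘ₗ f ∘ₗ ρ g⁻¹ ∈ S) (g : G) {u : Module.End k V}
    (hu : u ∈ (traceForm k V).orthogonal S) :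
    ρ g ∘ₗ u ∘ₗ ρ g⁻¹ ∈ (traceForm k V).orthogonal S := by
  rw [BilinForm.mem_orthogonal_iff] at hu ⊢
  intro w hw
  calc trace k V (w * (ρ g ∘ₗ u ∘ₗ ρ g⁻¹))
      = trace k V (ρ g⁻¹ ∘ₗ (w * (ρ g ∘ₗ u ∘ₗ ρ g⁻¹)) ∘ₗ ρ g⁻¹⁻¹) := (ρ.trace_conj _ _).symm
    _ = trace k V ((ρ g⁻¹ ∘ₗ w ∘ₗ ρ g⁻¹⁻¹) * u) := by congr 1; ext; simp
    _ = 0 := hu _ (hS g⁻¹ w hw)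

open Module.End in
theorem exists_conj_stable_line_of_finrank_eq_two [CharZero k] [FiniteDimensional k V]
    (hdim : finrank k V = 2) {W : Submodule k (Module.End k V)} (hWle : W ≤ ker (trace k V))
    (hW0 : W ≠ ⊥) (hWne : W ≠ ker (trace k V)) (hW : ∀ g, ∀ f ∈ W, ρ g ∘ₗ f ∘ₗ ρ g⁻¹ ∈ W) :
    ∃ U : Submodule k (Module.End k V), finrank k U = 1 ∧ U ≤ ker (trace k V) ∧
      ∀ g, ∀ f ∈ U, ρ g ∘ₗ f ∘ₗ ρ g⁻¹ ∈ U := by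
  have : Nontrivial V := nontrivial_of_finrank_eq_succ hdim
  have hsl : finrank k (ker (trace k V)) = 3 := by simp [finrank_ker_trace, hdim]
  have hWpos : finrank k W ≠ 0 := Submodule.finrank_eq_zero.not.mpr hW0
  have hWlt : finrank k W < 3 := hsl ▸ Submodule.finrank_lt_finrank_of_lt (hWle.lt_of_ne hWne)
  obtain hW1 | hW2 : finrank k W = 1 ∨ finrank k W = 2 := by omega
  · exact ⟨W, hW1, hWle, hW⟩
  set S := W ⊔ (k ∙ (1 : Module.End k V))
  have hS : finrank k S = 3 := by
    have htr1 : trace k V 1 ≠ 0 := by simp [hdim]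
    have hdisj : Disjoint W (k ∙ 1) :=
      (Submodule.disjoint_span_singleton' one_ne_zero).mpr fun h1 => htr1 (hWle h1)
    have := Submodule.finrank_sup_add_finrank_inf_eq W (k ∙ (1 : Module.End k V))
    rw [disjoint_iff.mp hdisj, finrank_bot, hW2, finrank_span_singleton one_ne_zero] at this
    omega
  have hSstable : ∀ g, ∀ f ∈ S, ρ g ∘ₗ f ∘ₗ ρ g⁻¹ ∈ S := fun g f hf => by
    obtain ⟨y, hy, x, hx, rfl⟩ := Submodule.mem_sup.mp hf
    obtain ⟨a, rfl⟩ := Submodule.mem_span_singleton.mp hx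
    have : ρ g ∘ₗ (y + a • 1) ∘ₗ ρ g⁻¹ = ρ g ∘ₗ y ∘ₗ ρ g⁻¹ + a • 1 := by ext; simp
    exact this ▸ Submodule.add_mem_sup (hW g y hy)
      (Submodule.smul_mem _ a (Submodule.mem_span_singleton_self 1))
  refine ⟨(traceForm k V).orthogonal S, ?_, fun u hu => ?_,
    fun g u hu => ρ.conj_mem_orthogonal_traceForm hSstable g hu⟩
  · rw [BilinForm.finrank_orthogonal traceForm_nondegenerate, hS, finrank_linearMap, hdim]
  · simpa using BilinForm.mem_orthogonal_iff.mp hu 1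
      (Submodule.mem_sup_right (Submodule.mem_span_singleton_self 1))

end Representation

open Representation in
theorem ad0_reducible_iff_twist_equiv_general
    {G : Type*} [Group G]
    {V : Type*} [AddCommGroup V] [Module ℂ V] [FiniteDimensional ℂ V]
    (hdim : Module.finrank ℂ V = 2)
    (ρ : Representation ℂ G V)
    (hirr : ∀ W : Submodule ℂ V, (∀ g : G, ∀ v ∈ W, ρ g v ∈ W) → W = ⊥ ∨ W = ⊤) :
    ((∃ W : Submodule ℂ (V →ₗ[ℂ] V),
        W ≤ LinearMap.ker (LinearMap.trace ℂ V) ∧ W ≠ ⊥ ∧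
        W ≠ LinearMap.ker (LinearMap.trace ℂ V) ∧
        ∀ g : G, ∀ f ∈ W, ρ g ∘ₗ f ∘ₗ ρ g⁻¹ ∈ W) ↔
      (∃ α : G →* ℂˣ, α ≠ 1 ∧
        ∃ T : V ≃ₗ[ℂ] V, ∀ (g : G) (v : V), T ((α g : ℂ) • ρ g v) = ρ g (T v))) ∧
    (∀ α : G →* ℂˣ, α ≠ 1 →
      (∃ T : V ≃ₗ[ℂ] V, ∀ (g : G) (v : V), T ((α g : ℂ) • ρ g v) = ρ g (T v)) →
      ∃ f : V →ₗ[ℂ] V, f ∈ LinearMap.ker (LinearMap.trace ℂ V) ∧ f ≠ 0 ∧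
        ∀ g : G, ρ g ∘ₗ f ∘ₗ ρ g⁻¹ = (α g : ℂ) • f) := by
  have : Nontrivial V := nontrivial_of_finrank_eq_succ hdim
  have twist_gives_line (α : G →* ℂˣ) (hα : α ≠ 1) := ρ.exists_conj_eq_smul_of_twist_equiv hα
  refine ⟨⟨fun ⟨W, hWle, hW0, hWne, hW⟩ => ?_, fun ⟨α, hα, hT⟩ => ?_⟩, twist_gives_line⟩
  · obtain ⟨U, hU1, hUle, hU⟩ := ρ.exists_conj_stable_line_of_finrank_eq_two hdim hWle hW0 hWne hW
    obtain ⟨f, hfU, hf0, α, hα⟩ :=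
      (ρ.linHom ρ).exists_monoidHom_of_finrank_eq_one hU1 (by simpa only [linHom_apply] using hU)
    simp only [linHom_apply] at hα
    exact ⟨α, ρ.ne_one_of_conj_eq_smul hirr hf0 (hUle hfU) hα,
      .ofBijective f (ρ.bijective_of_conj_eq_smul hirr hf0 hα),
      (ρ.twist_intertwines_iff_conj_eq_smul α f).mpr hα⟩
  · obtain ⟨f, hftr, hf0, hf⟩ := twist_gives_line α hα hT
    refine ⟨ℂ ∙ f, (Submodule.span_singleton_le_iff_mem _ _).mpr hftr,
      Submodule.span_singleton_eq_bot.not.mpr hf0, fun h => ?_, fun g x hx => ?_⟩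
    · have := finrank_span_singleton (K := ℂ) hf0
      rw [h, finrank_ker_trace, hdim] at this
      norm_num at this
    · obtain ⟨a, rfl⟩ := Submodule.mem_span_singleton.mp hx
      rw [smul_comp, comp_smul, hf]
      exact Submodule.smul_mem _ _ (Submodule.smul_mem _ _ (Submodule.mem_span_singleton_self f))

/-- For a finite group `G` and an irreducible 2-dimensional complex representation
`ρ` of `G`, the adjoint representation `Ad⁰(ρ)` on the trace-zero endomorphisms
`sl(V)` is reducible if and only if there is a nontrivial character `α : G → ℂˣ`
with `α ⊗ ρ ≅ ρ`; and in that case `α` occurs as a subrepresentation of `Ad⁰(ρ)`. -/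
theorem ad0_reducible_iff_twist_equiv
    {G : Type*} [Group G] [Finite G]
    {V : Type*} [AddCommGroup V] [Module ℂ V] [FiniteDimensional ℂ V]
    (hdim : Module.finrank ℂ V = 2)
    (ρ : Representation ℂ G V)
    (hirr : ∀ W : Submodule ℂ V, (∀ g : G, ∀ v ∈ W, ρ g v ∈ W) → W = ⊥ ∨ W = ⊤) :
    ((∃ W : Submodule ℂ (V →ₗ[ℂ] V),
        W ≤ LinearMap.ker (LinearMap.trace ℂ V) ∧ W ≠ ⊥ ∧
        W ≠ LinearMap.ker (LinearMap.trace ℂ V) ∧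
        ∀ g : G, ∀ f ∈ W, ρ g ∘ₗ f ∘ₗ ρ g⁻¹ ∈ W) ↔
      (∃ α : G →* ℂˣ, α ≠ 1 ∧
        ∃ T : V ≃ₗ[ℂ] V, ∀ (g : G) (v : V), T ((α g : ℂ) • ρ g v) = ρ g (T v))) ∧
    (∀ α : G →* ℂˣ, α ≠ 1 →
      (∃ T : V ≃ₗ[ℂ] V, ∀ (g : G) (v : V), T ((α g : ℂ) • ρ g v) = ρ g (T v)) →
      ∃ f : V →ₗ[ℂ] V, f ∈ LinearMap.ker (LinearMap.trace ℂ V) ∧ f ≠ 0 ∧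
        ∀ g : G, ρ g ∘ₗ f ∘ₗ ρ g⁻¹ = (α g : ℂ) • f) :=
  ad0_reducible_iff_twist_equiv_general hdim ρ hirr
end

section
/- Let G be a finite group, (ρ, V) an irreducible 2-dimensional complex representation of G, and α : G → ℂˣ a nontrivial homomorphism with α ⊗ ρ ≅ ρ. Then α² = 1, so H = ker α is a subgroup of index 2 in G; the restriction of ρ to H decomposes as a direct sum of two one-dimensional representations ξ and ξ′ of H which are distinct (ξ ≇ ξ′) and are interchanged by conjugation: ξ′(h) = ξ(g₀⁻¹ h g₀) for every h ∈ H and every g₀ ∈ G with g₀ ∉ H. -/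
lemma aux_char {G : Type*} [Group G] {V : Type*} [AddCommGroup V] [Module ℂ V]
    (ρ : Representation ℂ G V) (H : Subgroup G) (u : V) (hu : u ≠ 0)
    (hmem : ∀ h : H, ∃ c : ℂ, ρ (h : G) u = c • u) :
    ∃ ξ : H →* ℂˣ, ∀ h : H, ρ (h : G) u = (ξ h : ℂ) • u := by
  choose c hc using hmem
  have hinv : ∀ h : H, ρ ((h : G))⁻¹ (ρ (h : G) u) = u := by
    intro h
    rw [← Module.End.mul_apply, ← map_mul, inv_mul_cancel, map_one, Module.End.one_apply]
  have hcne : ∀ h : H, c h ≠ 0 := by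
    intro h h0
    apply hu
    have h1 : ρ (h : G) u = 0 := by rw [hc h, h0, zero_smul]
    have h2 := hinv h
    rw [h1, map_zero] at h2
    exact h2.symm
  have hmul : ∀ h₁ h₂ : H, c (h₁ * h₂) = c h₁ * c h₂ := by
    intro h₁ h₂
    have e1 : ρ ((h₁ * h₂ : H) : G) u = (c h₁ * c h₂) • u := by
      rw [Subgroup.coe_mul, map_mul, Module.End.mul_apply, hc h₂, map_smul, hc h₁,
        smul_smul, mul_comm]
    exact smul_left_injective ℂ hu ((hc (h₁ * h₂)).symm.trans e1)
  refine ⟨MonoidHom.mk' (fun h => Units.mk0 (c h) (hcne h)) (fun h₁ h₂ => ?_), fun h => by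
    simpa using hc h⟩
  ext
  simp [hmul]


/-- Let `ρ` be an irreducible 2-dimensional complex representation of a finite group `G`,
and `α : G → ℂˣ` a nontrivial character with `α ⊗ ρ ≅ ρ`. Then `α² = 1`, `H = ker α`
has index 2 in `G`, and `ρ|_H` is the direct sum of two distinct characters `ξ, ξ′` of
`H` which are interchanged by conjugation by any `g₀ ∉ H`. -/
theorem twist_equiv_restriction_splits
    {G : Type*} [Group G] [Finite G]
    {V : Type*} [AddCommGroup V] [Module ℂ V] [FiniteDimensional ℂ V]
    (hdim : Module.finrank ℂ V = 2)
    (ρ : Representation ℂ G V)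
    (hirr : ∀ W : Submodule ℂ V, (∀ g : G, ∀ v ∈ W, ρ g v ∈ W) → W = ⊥ ∨ W = ⊤)
    (α : G →* ℂˣ) (hα : α ≠ 1)
    (hequiv : ∃ T : V ≃ₗ[ℂ] V, ∀ (g : G) (v : V), T ((α g : ℂ) • ρ g v) = ρ g (T v)) :
    (∀ g : G, (α g) ^ 2 = 1) ∧
    (MonoidHom.ker α).index = 2 ∧
    ∃ (ξ ξ' : (MonoidHom.ker α) →* ℂˣ) (v w : V),
      v ≠ 0 ∧ w ≠ 0 ∧
      (Submodule.span ℂ {v} ⊔ Submodule.span ℂ {w} = ⊤) ∧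
      (Submodule.span ℂ {v} ⊓ Submodule.span ℂ {w} = ⊥) ∧
      (∀ h : MonoidHom.ker α, ρ (h : G) v = (ξ h : ℂ) • v) ∧
      (∀ h : MonoidHom.ker α, ρ (h : G) w = (ξ' h : ℂ) • w) ∧
      ξ ≠ ξ' ∧
      (∀ (h g₀ : G) (hh : h ∈ MonoidHom.ker α)
        (hconj : g₀⁻¹ * h * g₀ ∈ MonoidHom.ker α), g₀ ∉ MonoidHom.ker α →
        ξ' ⟨h, hh⟩ = ξ ⟨g₀⁻¹ * h * g₀, hconj⟩) := by

  obtain ⟨T, hT⟩ := hequiv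
  haveI : Nontrivial V := Module.finrank_pos_iff.mp (by rw [hdim]; norm_num)
  have hrhoinv : ∀ (g : G) (x : V), ρ g⁻¹ (ρ g x) = x := by
    intro g x
    rw [← Module.End.mul_apply, ← map_mul, inv_mul_cancel, map_one, Module.End.one_apply]
  have hrhone : ∀ (g : G) (x : V), x ≠ 0 → ρ g x ≠ 0 := by
    intro g x hx h0
    exact hx (by rw [← hrhoinv g x, h0, map_zero])
  have hdetne : ∀ g : G, LinearMap.det (ρ g) ≠ 0 := by
    intro g
    have h1 : LinearMap.det (ρ g) * LinearMap.det (ρ g⁻¹) = 1 := by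
      rw [← map_mul LinearMap.det, ← map_mul ρ, mul_inv_cancel, map_one, map_one]
    exact left_ne_zero_of_mul_eq_one h1
  -- α g squared is 1 (ℂ level)
  have hα2 : ∀ g : G, (α g : ℂ) ^ 2 = 1 := by
    intro g
    have hconj : ((T : V →ₗ[ℂ] V) ∘ₗ ((α g : ℂ) • (ρ g)) ∘ₗ (T.symm : V →ₗ[ℂ] V)) = ρ g := by
      apply LinearMap.ext; intro x
      have := hT g (T.symm x)
      simpa using this
    have h2 := LinearMap.det_conj ((α g : ℂ) • (ρ g : V →ₗ[ℂ] V)) T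
    rw [hconj, LinearMap.det_smul, hdim] at h2
    have h3 : (α g : ℂ) ^ 2 * LinearMap.det (ρ g) = 1 * LinearMap.det (ρ g) := by
      rw [one_mul]; exact h2.symm
    exact mul_right_cancel₀ (hdetne g) h3
  have hα2u : ∀ g : G, (α g) ^ 2 = 1 := fun g => Units.ext (by push_cast; exact hα2 g)
  have hval : ∀ g : G, (α g : ℂ) = 1 ∨ (α g : ℂ) = -1 := by
    intro g
    have h : ((α g : ℂ) - 1) * ((α g : ℂ) + 1) = 0 := by linear_combination hα2 g
    rcases mul_eq_zero.1 h with h' | h'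
    · exact Or.inl (sub_eq_zero.1 h')
    · exact Or.inr (eq_neg_of_add_eq_zero_left h')
  have hker : ∀ x : G, x ∈ MonoidHom.ker α ↔ (α x : ℂ) = 1 := fun x => by
    rw [MonoidHom.mem_ker, Units.ext_iff, Units.val_one]
  obtain ⟨g₀, hg₀⟩ : ∃ g, α g ≠ 1 := by
    by_contra hcon; push_neg at hcon
    exact hα (MonoidHom.ext fun g => hcon g)
  have hg₀v : (α g₀ : ℂ) = -1 :=
    (hval g₀).resolve_left (fun hc => hg₀ (Units.ext (by rw [hc]; rfl)))
  have hidx : (MonoidHom.ker α).index = 2 := by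
    rw [Subgroup.index_eq_two_iff]
    refine ⟨g₀, fun b => ?_⟩
    rcases hval b with hb | hb
    · refine Or.inr ⟨(hker b).2 hb, fun hmem => ?_⟩
      rw [hker, map_mul, Units.val_mul, hb, hg₀v] at hmem
      norm_num at hmem
    · refine Or.inl ⟨(hker _).2 ?_, fun hmem => ?_⟩
      · rw [map_mul, Units.val_mul, hb, hg₀v]; norm_num
      · rw [hker] at hmem; rw [hmem] at hb; norm_num at hb
  -- Schur's lemma
  have schur : ∀ S : V →ₗ[ℂ] V, (∀ (g : G) (x : V), S (ρ g x) = ρ g (S x)) →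
      ∃ c : ℂ, ∀ x, S x = c • x := by
    intro S hS
    obtain ⟨c, hc⟩ := Module.End.exists_eigenvalue (S : Module.End ℂ V)
    rcases hirr (Module.End.eigenspace S c) (fun g x hx => by
      rw [Module.End.mem_eigenspace_iff] at hx ⊢
      rw [hS, hx, map_smul]) with h0 | htop
    · exact absurd h0 hc
    · exact ⟨c, fun x => Module.End.mem_eigenspace_iff.1 (htop ▸ Submodule.mem_top)⟩
  -- T almost commutes
  have hTg : ∀ (g : G) (x : V), T (ρ g x) = (α g : ℂ) • ρ g (T x) := by
    intro g x
    have h1 : (α g : ℂ) • T (ρ g x) = ρ g (T x) := by rw [← map_smul]; exact hT g x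
    have h2 : (α g : ℂ) • ((α g : ℂ) • T (ρ g x)) = (α g : ℂ) • ρ g (T x) := by rw [h1]
    rwa [smul_smul, ← sq, hα2 g, one_smul] at h2
  obtain ⟨γ, hγ⟩ := schur ((T : V →ₗ[ℂ] V) ∘ₗ (T : V →ₗ[ℂ] V)) (by
    intro g x
    simp only [LinearMap.comp_apply, LinearEquiv.coe_coe]
    rw [hTg, map_smul, hTg, smul_smul, ← sq, hα2, one_smul])
  have hγ' : ∀ x : V, T (T x) = γ • x := fun x => hγ x
  have hγ0 : γ ≠ 0 := by
    obtain ⟨v₀, hv₀⟩ := exists_ne (0 : V)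
    intro h0
    apply hv₀
    have := hγ' v₀
    rw [h0, zero_smul] at this
    have h1 : T (T v₀) = T 0 := by rw [this, map_zero]
    have h2 : T v₀ = T 0 := by rw [T.injective h1, map_zero]
    exact T.injective h2
  obtain ⟨s, hs⟩ := IsAlgClosed.exists_pow_nat_eq γ (n := 2) two_pos
  have hs0 : s ≠ 0 := fun h => hγ0 (by rw [← hs, h]; ring)
  set Tl : V →ₗ[ℂ] V := s⁻¹ • (T : V →ₗ[ℂ] V) with hTldef
  have hTlapp : ∀ x : V, Tl x = s⁻¹ • T x := fun x => rfl
  have hTl2 : ∀ x : V, Tl (Tl x) = x := by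
    intro x
    rw [hTlapp, hTlapp, map_smul, hγ', smul_smul, smul_smul, ← hs]
    have h1 : s⁻¹ * s⁻¹ * s ^ 2 = 1 := by field_simp
    rw [h1, one_smul]
  have hTlint : ∀ (g : G) (x : V), Tl (ρ g x) = (α g : ℂ) • ρ g (Tl x) := by
    intro g x
    rw [hTlapp, hTg, hTlapp, map_smul, smul_comm]
  -- eigenspaces
  set Ep : Submodule ℂ V := LinearMap.ker (Tl - LinearMap.id) with hEpdef
  set Em : Submodule ℂ V := LinearMap.ker (Tl + LinearMap.id) with hEmdef
  have hmemEp : ∀ x : V, x ∈ Ep ↔ Tl x = x := by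
    intro x
    rw [hEpdef, LinearMap.mem_ker, LinearMap.sub_apply, LinearMap.id_apply, sub_eq_zero]
  have hmemEm : ∀ x : V, x ∈ Em ↔ Tl x = -x := by
    intro x
    rw [hEmdef, LinearMap.mem_ker, LinearMap.add_apply, LinearMap.id_apply,
      add_eq_zero_iff_eq_neg]
  have hαone : ∀ g : G, (α g : ℂ) = 1 → ∀ x : V, Tl (ρ g x) = ρ g (Tl x) := by
    intro g hg x; rw [hTlint, hg, one_smul]
  -- Ep is nonzero
  have hEpne : Ep ≠ ⊥ := by
    intro h0
    have hneg : ∀ x : V, Tl x = -x := by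
      intro x
      have hx : x + Tl x ∈ Ep := by
        rw [hmemEp, map_add, hTl2, add_comm]
      rw [h0, Submodule.mem_bot] at hx
      exact eq_neg_of_add_eq_zero_right hx
    apply hα
    apply MonoidHom.ext; intro g; apply Units.ext
    obtain ⟨u, hu⟩ := exists_ne (0 : V)
    have h1 := hTlint g u
    rw [hneg, hneg, map_neg, neg_eq_iff_eq_neg, ← smul_neg, neg_neg] at h1
    have h2 : ((α g : ℂ) - 1) • ρ g u = 0 := by
      rw [sub_smul, one_smul, ← h1, sub_self]
    rcases smul_eq_zero.1 h2 with h3 | h3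
    · rw [MonoidHom.one_apply, Units.val_one]; linear_combination h3
    · exact absurd h3 (hrhone g u hu)
  obtain ⟨v, hvEp, hv0⟩ := (Submodule.ne_bot_iff Ep).1 hEpne
  have hvTl : Tl v = v := (hmemEp v).1 hvEp
  set w : V := ρ g₀ v with hwdef
  have hw0 : w ≠ 0 := hrhone g₀ v hv0
  have hwTl : Tl w = -w := by
    rw [hwdef, hTlint, hvTl, hg₀v, neg_one_smul]
  have hwEm : w ∈ Em := (hmemEm w).2 hwTl
  -- sup and inf
  have hsup : Ep ⊔ Em = ⊤ := by
    rw [eq_top_iff]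
    intro x _
    have h1 : (2⁻¹ : ℂ) • (x + Tl x) ∈ Ep := by
      rw [hmemEp, map_smul, map_add, hTl2, add_comm]
    have h2 : (2⁻¹ : ℂ) • (x - Tl x) ∈ Em := by
      rw [hmemEm, map_smul, map_sub, hTl2, ← smul_neg, neg_sub]
    have hx : x = (2⁻¹ : ℂ) • (x + Tl x) + (2⁻¹ : ℂ) • (x - Tl x) := by
      rw [← smul_add]
      have : x + Tl x + (x - Tl x) = (2 : ℂ) • x := by rw [two_smul]; abel
      rw [this, smul_smul]
      norm_num
    rw [hx]
    exact Submodule.add_mem_sup h1 h2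
  have hinf : Ep ⊓ Em = ⊥ := by
    rw [eq_bot_iff]
    intro x hx
    obtain ⟨hx1, hx2⟩ := Submodule.mem_inf.1 hx
    rw [hmemEp] at hx1; rw [hmemEm] at hx2
    have : (2 : ℂ) • x = 0 := by rw [two_smul]; exact add_eq_zero_iff_eq_neg.2 (hx1.symm.trans hx2)
    rw [Submodule.mem_bot]
    simpa using (smul_eq_zero.1 this).resolve_left (by norm_num)
  -- dimensions
  have hrank : Module.finrank ℂ Ep = 1 ∧ Module.finrank ℂ Em = 1 := by
    have hf := Submodule.finrank_sup_add_finrank_inf_eq Ep Em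
    rw [hsup, hinf, finrank_top, hdim, finrank_bot] at hf
    have h1 : 1 ≤ Module.finrank ℂ Ep := by
      have := Submodule.finrank_mono (Submodule.span_le.2
        (Set.singleton_subset_iff.2 hvEp) : Submodule.span ℂ {v} ≤ Ep)
      rwa [finrank_span_singleton hv0] at this
    have h2 : 1 ≤ Module.finrank ℂ Em := by
      have := Submodule.finrank_mono (Submodule.span_le.2
        (Set.singleton_subset_iff.2 hwEm) : Submodule.span ℂ {w} ≤ Em)
      rwa [finrank_span_singleton hw0] at this
    omega
  have hspv : Submodule.span ℂ {v} = Ep := by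
    apply Submodule.eq_of_le_of_finrank_eq
      (Submodule.span_le.2 (Set.singleton_subset_iff.2 hvEp))
    rw [finrank_span_singleton hv0, hrank.1]
  have hspw : Submodule.span ℂ {w} = Em := by
    apply Submodule.eq_of_le_of_finrank_eq
      (Submodule.span_le.2 (Set.singleton_subset_iff.2 hwEm))
    rw [finrank_span_singleton hw0, hrank.2]
  -- characters
  have hmemv : ∀ h : MonoidHom.ker α, ∃ c : ℂ, ρ (h : G) v = c • v := by
    intro h
    have h1 : ρ (h : G) v ∈ Ep := by
      rw [hmemEp, hαone (h : G) ((hker _).1 h.2), hvTl]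
    rw [← hspv, Submodule.mem_span_singleton] at h1
    obtain ⟨a, ha⟩ := h1
    exact ⟨a, ha.symm⟩
  have hmemw : ∀ h : MonoidHom.ker α, ∃ c : ℂ, ρ (h : G) w = c • w := by
    intro h
    have h1 : ρ (h : G) w ∈ Em := by
      rw [hmemEm, hαone (h : G) ((hker _).1 h.2), hwTl, map_neg]
    rw [← hspw, Submodule.mem_span_singleton] at h1
    obtain ⟨a, ha⟩ := h1
    exact ⟨a, ha.symm⟩
  obtain ⟨ξ, hξ⟩ := aux_char ρ (MonoidHom.ker α) v hv0 hmemv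
  obtain ⟨ξ', hξ'⟩ := aux_char ρ (MonoidHom.ker α) w hw0 hmemw
  refine ⟨hα2u, hidx, ξ, ξ', v, w, hv0, hw0, by rw [hspv, hspw]; exact hsup,
    by rw [hspv, hspw]; exact hinf, hξ, hξ', ?_, ?_⟩
  · -- ξ ≠ ξ'
    intro heq
    have hscal : ∀ h : MonoidHom.ker α, ∀ x : V, ρ (h : G) x = (ξ h : ℂ) • x := by
      intro h x
      have hle : (⊤ : Submodule ℂ V) ≤
          LinearMap.ker ((ρ (h : G)) - (ξ h : ℂ) • LinearMap.id) := by
        rw [← hsup, ← hspv, ← hspw]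
        apply sup_le <;> rw [Submodule.span_le, Set.singleton_subset_iff] <;>
          rw [SetLike.mem_coe, LinearMap.mem_ker, LinearMap.sub_apply, LinearMap.smul_apply,
            LinearMap.id_apply, sub_eq_zero]
        · exact hξ h
        · rw [heq]; exact hξ' h
      have h2 := hle (Submodule.mem_top : x ∈ ⊤)
      rw [LinearMap.mem_ker, LinearMap.sub_apply, LinearMap.smul_apply, LinearMap.id_apply,
        sub_eq_zero] at h2
      exact h2
    obtain ⟨μ, hμ⟩ := Module.End.exists_eigenvalue (ρ g₀ : Module.End ℂ V)
    obtain ⟨u, hu⟩ := hμ.exists_hasEigenvector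
    have hu0 : u ≠ 0 := hu.2
    have hueq : ρ g₀ u = μ • u := hu.apply_eq_smul
    have hinvu : ∀ g : G, ∀ x ∈ Submodule.span ℂ ({u} : Set V),
        ρ g x ∈ Submodule.span ℂ ({u} : Set V) := by
      intro g x hx
      rw [Submodule.mem_span_singleton] at hx ⊢
      obtain ⟨a, rfl⟩ := hx
      rcases hval g with hg | hg
      · have hgk := (hker g).2 hg
        have h1 : ρ g u = (ξ ⟨g, hgk⟩ : ℂ) • u := hscal ⟨g, hgk⟩ u
        exact ⟨a * (ξ ⟨g, hgk⟩ : ℂ), by rw [map_smul, h1, smul_smul]⟩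
      · have hgk : g * g₀⁻¹ ∈ MonoidHom.ker α := by
          rw [hker, map_mul, map_inv, Units.val_mul, Units.val_inv_eq_inv_val, hg, hg₀v]
          norm_num
        have h1 : ρ (g * g₀⁻¹) u = (ξ ⟨g * g₀⁻¹, hgk⟩ : ℂ) • u := hscal ⟨g * g₀⁻¹, hgk⟩ u
        refine ⟨a * (μ * (ξ ⟨g * g₀⁻¹, hgk⟩ : ℂ)), ?_⟩
        have hgg : ρ g (a • u) = ρ (g * g₀⁻¹) (ρ g₀ (a • u)) := by
          rw [← Module.End.mul_apply, ← map_mul, inv_mul_cancel_right]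
        rw [hgg, map_smul, hueq, map_smul, map_smul, h1, smul_smul, smul_smul, mul_assoc]
    rcases hirr _ hinvu with h0 | htop2
    · exact hu0 (Submodule.span_singleton_eq_bot.1 h0)
    · have h1 : Module.finrank ℂ (Submodule.span ℂ ({u} : Set V)) = 1 :=
        finrank_span_singleton hu0
      rw [htop2, finrank_top, hdim] at h1
      norm_num at h1
  · -- conjugation
    intro h g₁ hh hconj hg₁
    have hg₁v : (α g₁ : ℂ) = -1 := (hval g₁).resolve_left fun hc => hg₁ ((hker g₁).2 hc)
    set u := ρ g₁ v with hudef
    have hu0 : u ≠ 0 := hrhone g₁ v hv0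
    have huEm : u ∈ Em := by
      rw [hmemEm, hudef, hTlint, hvTl, hg₁v, neg_one_smul]
    rw [← hspw, Submodule.mem_span_singleton] at huEm
    obtain ⟨a, ha⟩ := huEm
    have hξ'h : ρ h w = (ξ' ⟨h, hh⟩ : ℂ) • w := hξ' ⟨h, hh⟩
    have e1 : ρ h u = (ξ' ⟨h, hh⟩ : ℂ) • u := by
      rw [← ha, map_smul, hξ'h, smul_smul, smul_smul, mul_comm]
    have hξc : ρ (g₁⁻¹ * h * g₁) v = (ξ ⟨g₁⁻¹ * h * g₁, hconj⟩ : ℂ) • v :=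
      hξ ⟨g₁⁻¹ * h * g₁, hconj⟩
    have e2 : ρ h u = (ξ ⟨g₁⁻¹ * h * g₁, hconj⟩ : ℂ) • u := by
      have hA : ρ h u = ρ (h * g₁) v := by
        rw [hudef, ← Module.End.mul_apply, ← map_mul]
      have hB : ρ (h * g₁) v = ρ g₁ (ρ (g₁⁻¹ * h * g₁) v) := by
        rw [← Module.End.mul_apply, ← map_mul]
        have hgrp : h * g₁ = g₁ * (g₁⁻¹ * h * g₁) := by group
        rw [hgrp]
      rw [hA, hB, hξc, map_smul, hudef]
    exact Units.ext (smul_left_injective ℂ hu0 (e1.symm.trans e2))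
end

section
/- Let G be a finite group and (ρ, V) an irreducible 2-dimensional complex representation of G. Suppose there is a normal subgroup K′ of G such that G/K′ is isomorphic to the Klein four-group ℤ/2 × ℤ/2 and such that χ ⊗ ρ ≅ ρ for every homomorphism χ : G → ℂˣ that is trivial on K′. Let χ₁, χ₂, χ₃ be the three distinct nontrivial homomorphisms G → ℂˣ trivial on K′. Then Ad⁰(ρ) ≅ χ₁ ⊕ χ₂ ⊕ χ₃ as representations of G. -/
/-- Let `ρ` be an irreducible 2-dimensional complex representation of a finite group `G`,
`K′ ⊴ G` with `G/K′` isomorphic to the Klein four-group, such that `χ ⊗ ρ ≅ ρ` for every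
character `χ` of `G` trivial on `K′`. If `χ₁, χ₂, χ₃` are the three distinct nontrivial
characters of `G` trivial on `K′`, then `Ad⁰(ρ) ≅ χ₁ ⊕ χ₂ ⊕ χ₃`: there are trace-zero
endomorphisms `f₁, f₂, f₃` spanning `sl(V)` on which `G` acts by `χ₁, χ₂, χ₃`. -/
theorem ad0_triply_imprimitive_decomposition
    {G : Type*} [Group G] [Finite G]
    {V : Type*} [AddCommGroup V] [Module ℂ V] [FiniteDimensional ℂ V]
    (hdim : Module.finrank ℂ V = 2)
    (ρ : Representation ℂ G V)
    (hirr : ∀ W : Submodule ℂ V, (∀ g : G, ∀ v ∈ W, ρ g v ∈ W) → W = ⊥ ∨ W = ⊤)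
    (K' : Subgroup G) [K'.Normal]
    (hKlein : Nonempty ((G ⧸ K') ≃* Multiplicative (ZMod 2 × ZMod 2)))
    (htwist : ∀ χ : G →* ℂˣ, (∀ k ∈ K', χ k = 1) →
      ∃ T : V ≃ₗ[ℂ] V, ∀ (g : G) (v : V), T ((χ g : ℂ) • ρ g v) = ρ g (T v))
    (χ₁ χ₂ χ₃ : G →* ℂˣ)
    (h₁ : ∀ k ∈ K', χ₁ k = 1) (h₂ : ∀ k ∈ K', χ₂ k = 1) (h₃ : ∀ k ∈ K', χ₃ k = 1)
    (hn₁ : χ₁ ≠ 1) (hn₂ : χ₂ ≠ 1) (hn₃ : χ₃ ≠ 1)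
    (h₁₂ : χ₁ ≠ χ₂) (h₁₃ : χ₁ ≠ χ₃) (h₂₃ : χ₂ ≠ χ₃) :
    ∃ f₁ f₂ f₃ : V →ₗ[ℂ] V,
      f₁ ∈ LinearMap.ker (LinearMap.trace ℂ V) ∧
      f₂ ∈ LinearMap.ker (LinearMap.trace ℂ V) ∧
      f₃ ∈ LinearMap.ker (LinearMap.trace ℂ V) ∧
      f₁ ≠ 0 ∧ f₂ ≠ 0 ∧ f₃ ≠ 0 ∧
      (∀ g : G, ρ g ∘ₗ f₁ ∘ₗ ρ g⁻¹ = (χ₁ g : ℂ) • f₁) ∧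
      (∀ g : G, ρ g ∘ₗ f₂ ∘ₗ ρ g⁻¹ = (χ₂ g : ℂ) • f₂) ∧
      (∀ g : G, ρ g ∘ₗ f₃ ∘ₗ ρ g⁻¹ = (χ₃ g : ℂ) • f₃) ∧
      Submodule.span ℂ {f₁, f₂, f₃} = LinearMap.ker (LinearMap.trace ℂ V) := by
  classical
  have hnt : Nontrivial V := by
    apply Module.nontrivial_of_finrank_pos (R := ℂ); omega
  -- Step 1: from each nontrivial character, produce a nonzero trace-zero eigen-endomorphism.
  have key : ∀ χ : G →* ℂˣ, (∀ k ∈ K', χ k = 1) → χ ≠ 1 →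
      ∃ f : V →ₗ[ℂ] V, f ≠ 0 ∧ (∀ g : G, ρ g ∘ₗ f ∘ₗ ρ g⁻¹ = (χ g : ℂ) • f) ∧
        LinearMap.trace ℂ V f = 0 := by
    intro χ hχ hχn
    obtain ⟨T, hT⟩ := htwist χ hχ
    have hρρ : ∀ (g : G) (v : V), ρ g (ρ g⁻¹ v) = v := by
      intro g v
      have : ρ g * ρ g⁻¹ = 1 := by rw [← map_mul, mul_inv_cancel, map_one]
      calc ρ g (ρ g⁻¹ v) = (ρ g * ρ g⁻¹) v := rfl
        _ = v := by rw [this]; rfl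
    have hconj : ∀ g : G, ρ g ∘ₗ (T : V →ₗ[ℂ] V) ∘ₗ ρ g⁻¹ = (χ g : ℂ) • (T : V →ₗ[ℂ] V) := by
      intro g
      ext v
      have := hT g (ρ g⁻¹ v)
      rw [hρρ g v] at this
      simpa [map_smul] using this.symm
    refine ⟨T, ?_, hconj, ?_⟩
    · intro h0
      obtain ⟨v, hv⟩ := exists_ne (0 : V)
      have : T v = 0 := by rw [← T.coe_coe, h0]; rfl
      exact hv (by simpa using T.injective (by simpa using this))
    · obtain ⟨g, hg⟩ : ∃ g : G, χ g ≠ 1 := by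
        by_contra h
        push_neg at h
        exact hχn (MonoidHom.ext fun g => h g)
      have h1 : LinearMap.trace ℂ V (ρ g ∘ₗ (T : V →ₗ[ℂ] V) ∘ₗ ρ g⁻¹) =
          LinearMap.trace ℂ V (T : V →ₗ[ℂ] V) := by
        have : ρ g ∘ₗ ((T : V →ₗ[ℂ] V) ∘ₗ ρ g⁻¹) = ρ g * ((T : V →ₗ[ℂ] V) * ρ g⁻¹) := rfl
        rw [this, LinearMap.trace_mul_comm]
        have : (T : V →ₗ[ℂ] V) * ρ g⁻¹ * ρ g = (T : V →ₗ[ℂ] V) := by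
          rw [mul_assoc, ← map_mul, inv_mul_cancel, map_one, mul_one]
        rw [this]
      rw [hconj g, map_smul] at h1
      have hgc : (χ g : ℂ) ≠ 1 := fun h => hg (Units.ext h)
      have := sub_eq_zero.mpr h1
      rw [smul_eq_mul, ← sub_one_mul] at this
      rcases mul_eq_zero.mp this with h | h
      · exact absurd (by linear_combination h) hgc
      · exact h
  obtain ⟨f₁, hf₁0, hc₁, ht₁⟩ := key χ₁ h₁ hn₁
  obtain ⟨f₂, hf₂0, hc₂, ht₂⟩ := key χ₂ h₂ hn₂
  obtain ⟨f₃, hf₃0, hc₃, ht₃⟩ := key χ₃ h₃ hn₃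
  set F : Fin 3 → (V →ₗ[ℂ] V) := ![f₁, f₂, f₃] with hF
  set X : Fin 3 → (G →* ℂˣ) := ![χ₁, χ₂, χ₃] with hX
  have hcX : ∀ (i : Fin 3) (g : G), ρ g ∘ₗ F i ∘ₗ ρ g⁻¹ = (X i g : ℂ) • F i := by
    intro i g; fin_cases i <;> simp [hF, hX, hc₁ g, hc₂ g, hc₃ g]
  have hF0 : ∀ i : Fin 3, F i ≠ 0 := by
    intro i; fin_cases i <;> assumption
  -- characters as maps to ℂ
  set e : Fin 3 → (G →* ℂ) := fun i => (Units.coeHom ℂ).comp (X i) with he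
  have einj : Function.Injective e := by
    intro i j hij
    have hXij : X i = X j := by
      ext g
      exact DFunLike.congr_fun hij g
    clear hij
    fin_cases i <;> fin_cases j <;>
      first
        | rfl
        | exact absurd hXij h₁₂
        | exact absurd hXij h₁₃
        | exact absurd hXij h₂₃
        | exact absurd hXij.symm h₁₂
        | exact absurd hXij.symm h₁₃
        | exact absurd hXij.symm h₂₃
  have hchar : LinearIndependent ℂ (fun i : Fin 3 => ((e i : G →* ℂ) : G → ℂ)) :=
    (linearIndependent_monoidHom G ℂ).comp e einj
  -- Step 2: linear independence of f₁, f₂, f₃.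
  have hli : LinearIndependent ℂ F := by
    rw [Fintype.linearIndependent_iff]
    intro c hc i
    by_contra hci
    apply hF0 i
    rw [← Module.forall_dual_apply_eq_zero_iff ℂ (F i)]
    intro φ
    have hg : ∀ g : G, ∑ j : Fin 3, (c j * (X j g : ℂ)) • F j = 0 := by
      intro g
      have := congrArg (fun f : V →ₗ[ℂ] V => ρ g ∘ₗ f ∘ₗ ρ g⁻¹) hc
      simp only [Fin.sum_univ_three] at this hc ⊢
      simp only [LinearMap.comp_add, LinearMap.add_comp, LinearMap.comp_smul,
        LinearMap.smul_comp, LinearMap.comp_zero, LinearMap.zero_comp] at this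
      rw [hcX 0 g, hcX 1 g, hcX 2 g] at this
      simpa [smul_smul, mul_comm] using this
    have hsum : (∑ j : Fin 3, (c j * φ (F j)) • ((e j : G → ℂ))) = 0 := by
      funext g
      have := congrArg φ (hg g)
      simp only [map_sum, map_smul, map_zero, smul_eq_mul] at this
      simpa [Finset.sum_apply, Pi.smul_apply, smul_eq_mul, he, mul_assoc,
        mul_comm, mul_left_comm] using this
    have := Fintype.linearIndependent_iff.mp hchar (fun j => c j * φ (F j)) hsum i
    rcases mul_eq_zero.mp this with h | h
    · exact absurd h hci
    · exact h
  -- Step 3: dimension count.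
  have hEnd : Module.finrank ℂ (V →ₗ[ℂ] V) = 4 := by
    rw [Module.finrank_linearMap, hdim]
  have htr_ne : LinearMap.trace ℂ V ≠ 0 := by
    intro h
    have h2 : LinearMap.trace ℂ V (LinearMap.id) = (2 : ℂ) := by
      rw [LinearMap.trace_id, hdim]; norm_num
    rw [h] at h2
    simp at h2
  have hrange : LinearMap.range (LinearMap.trace ℂ V) = ⊤ := by
    rcases eq_bot_or_eq_top (LinearMap.range (LinearMap.trace ℂ V)) with h | h
    · exact absurd (LinearMap.range_eq_bot.mp h) htr_ne
    · exact h
  have hker : Module.finrank ℂ (LinearMap.ker (LinearMap.trace ℂ V)) = 3 := by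
    have := LinearMap.finrank_range_add_finrank_ker (LinearMap.trace ℂ V)
    rw [hrange, finrank_top, Module.finrank_self, hEnd] at this
    omega
  have hsetrange : ({f₁, f₂, f₃} : Set (V →ₗ[ℂ] V)) = Set.range F := by
    ext x
    simp only [hF, Set.mem_insert_iff, Set.mem_singleton_iff, Set.mem_range]
    constructor
    · rintro (rfl | rfl | rfl)
      exacts [⟨0, rfl⟩, ⟨1, rfl⟩, ⟨2, rfl⟩]
    · rintro ⟨i, rfl⟩
      fin_cases i
      · exact Or.inl rfl
      · exact Or.inr (Or.inl rfl)
      · exact Or.inr (Or.inr rfl)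
  have hspan3 : Module.finrank ℂ (Submodule.span ℂ ({f₁, f₂, f₃} : Set (V →ₗ[ℂ] V))) = 3 := by
    rw [hsetrange, finrank_span_eq_card hli]
    simp
  have hle : Submodule.span ℂ ({f₁, f₂, f₃} : Set (V →ₗ[ℂ] V)) ≤
      LinearMap.ker (LinearMap.trace ℂ V) := by
    rw [Submodule.span_le]
    rintro x (rfl | rfl | rfl) <;> simpa [LinearMap.mem_ker]
  refine ⟨f₁, f₂, f₃, by simpa [LinearMap.mem_ker], by simpa [LinearMap.mem_ker],
    by simpa [LinearMap.mem_ker], hf₁0, hf₂0, hf₃0, hc₁, hc₂, hc₃, ?_⟩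
  exact Submodule.eq_of_le_of_finrank_le hle (by rw [hker, hspan3])
end

section
/- Let A be the Cartan matrix of type E₇ (Bourbaki numbering). Let s, r₁, r₂, r₃, r₄ be real numbers with s ≥ 1/2, 0 ≤ r₁ < 1/2, 0 ≤ r₄ < 1/2, and 0 ≤ r₃ ≤ r₂ < 1/2, and let c = (4s + r₁, 6s + r₄, 8s + r₁, 12s, 9s + r₂, 6s + r₂ + r₃, 3s + r₂) ∈ ℝ⁷. Then for every m ∈ ℤ⁷ with all entries nonnegative and mᵀA m = 2 (i.e., for every positive root of E₇ written in the basis of simple roots), one has cᵀ(A m) > −1. Moreover, for m = e₄ = (0,0,0,1,0,0,0), cᵀ(A e₄) = s − (r₁ + r₂ + r₄). -/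
/-!
Write `c = s ϖ₄ + r₁ (α₁ + α₃) + r₄ α₂ + r₂ (α₅ + α₆ + α₇) + r₃ α₆`, where `ϖ₄` is the fundamental
weight dual to `α₄`. The pairing of `c` with a positive root `β = Σ mᵢ αᵢ` is then
`s m₄ + r₁ ⟨α₁ + α₃, β⟩ + r₄ ⟨α₂, β⟩ + r₂ ⟨α₅ + α₆ + α₇, β⟩ + r₃ ⟨α₆, β⟩`.
The `E₇` form is integral and positive definite, so two positive roots `β, γ` satisfy
`⟨β, γ⟩ ≥ -1`: otherwise `β + γ ≠ 0` would have norm `4 + 2 ⟨β, γ⟩ ≤ 0`.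
Applied to the roots `α₁ + α₃`, `α₂` and `α₅ + α₆ + α₇`, and using `r₃ ≤ r₂` and `r₃ ≤ s`,
this bounds the pairing below by `min 0 (s - (r₁ + r₂ + r₄))`, which exceeds `-1`.
-/

/-- The Cartan matrix of type `E₇` in Bourbaki numbering. -/
def cartanE7 : Matrix (Fin 7) (Fin 7) ℝ :=
  !![ 2,  0, -1,  0,  0,  0,  0;
      0,  2,  0, -1,  0,  0,  0;
     -1,  0,  2, -1,  0,  0,  0;
      0, -1, -1,  2, -1,  0,  0;
      0,  0,  0, -1,  2, -1,  0;
      0,  0,  0,  0, -1,  2, -1;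
      0,  0,  0,  0,  0, -1,  2]

open Matrix

theorem Matrix.IsSymm.neg_one_le_dotProduct_mulVec {ι : Type*} [Fintype ι] {A : Matrix ι ι ℤ}
    (hA : A.IsSymm) (hpos : ∀ x ≠ 0, 0 < x ⬝ᵥ A *ᵥ x) {m n : ι → ℤ}
    (hm : m ⬝ᵥ A *ᵥ m = 2) (hn : n ⬝ᵥ A *ᵥ n = 2) (hmn : m + n ≠ 0) :
    -1 ≤ m ⬝ᵥ A *ᵥ n := by
  have hnm : n ⬝ᵥ A *ᵥ m = m ⬝ᵥ A *ᵥ n := by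
    rw [dotProduct_mulVec, ← mulVec_transpose, hA.eq, dotProduct_comm]
  have hsum := hpos _ hmn
  simp only [mulVec_add, dotProduct_add, add_dotProduct] at hsum
  omega

theorem Matrix.IsSymm.neg_one_le_dotProduct_mulVec_of_nonneg {ι : Type*} [Fintype ι]
    {A : Matrix ι ι ℤ} (hA : A.IsSymm) (hpos : ∀ x ≠ 0, 0 < x ⬝ᵥ A *ᵥ x) {m n : ι → ℤ}
    (hm0 : 0 ≤ m) (hn0 : 0 ≤ n) (hm : m ⬝ᵥ A *ᵥ m = 2) (hn : n ⬝ᵥ A *ᵥ n = 2) :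
    -1 ≤ m ⬝ᵥ A *ᵥ n := by
  refine hA.neg_one_le_dotProduct_mulVec hpos hm hn fun hmn => ?_
  rw [((add_eq_zero_iff_of_nonneg hm0 hn0).mp hmn).2] at hn
  simp at hn

namespace CartanMatrix

-- The `LDLᵀ` decomposition of `E₇`, eliminating the leaves `α₁, α₂, α₇` first.
theorem twelve_mul_E₇_quadForm (x : Fin 7 → ℤ) :
    12 * (x ⬝ᵥ E₇ *ᵥ x) = 6 * (2 * x 0 - x 2) ^ 2 + 6 * (2 * x 1 - x 3) ^ 2
      + 6 * (2 * x 6 - x 5) ^ 2 + 2 * (3 * x 2 - 2 * x 3) ^ 2 + 2 * (3 * x 5 - 2 * x 4) ^ 2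
      + (4 * x 4 - 3 * x 3) ^ 2 + x 3 ^ 2 := by
  simp only [dotProduct, mulVec, E₇, Int.reduceNeg, of_apply, cons_val', cons_val_fin_one,
    Fin.sum_univ_seven, Fin.isValue, cons_val_zero, cons_val_one, cons_val, zero_mul, add_zero,
    neg_mul, one_mul, zero_add]
  ring

theorem E₇_quadForm_pos {x : Fin 7 → ℤ} (hx : x ≠ 0) : 0 < x ⬝ᵥ E₇ *ᵥ x := by
  by_contra! h
  have hsos := twelve_mul_E₇_quadForm x
  have hzero : 2 * x 0 - x 2 = 0 ∧ 2 * x 1 - x 3 = 0 ∧ 2 * x 6 - x 5 = 0 ∧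
      3 * x 2 - 2 * x 3 = 0 ∧ 3 * x 5 - 2 * x 4 = 0 ∧ 4 * x 4 - 3 * x 3 = 0 ∧ x 3 = 0 := by
    and_intros <;> refine pow_eq_zero_iff two_ne_zero |>.mp (le_antisymm ?_ (sq_nonneg _)) <;>
      linarith [sq_nonneg (2 * x 0 - x 2), sq_nonneg (2 * x 1 - x 3), sq_nonneg (2 * x 6 - x 5),
        sq_nonneg (3 * x 2 - 2 * x 3), sq_nonneg (3 * x 5 - 2 * x 4), sq_nonneg (4 * x 4 - 3 * x 3),
        sq_nonneg (x 3)]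
  exact hx <| funext fun i => by
    fin_cases i <;>
      simp only [Fin.zero_eta, Fin.mk_one, Fin.reduceFinMk, Fin.isValue, Pi.zero_apply] <;> omega

theorem neg_one_le_E₇_pairing {β γ : Fin 7 → ℤ} (hβ0 : ∀ i, 0 ≤ β i) (hγ0 : ∀ i, 0 ≤ γ i)
    (hβ : β ⬝ᵥ E₇ *ᵥ β = 2) (hγ : γ ⬝ᵥ E₇ *ᵥ γ = 2) : -1 ≤ γ ⬝ᵥ E₇ *ᵥ β :=
  E₇_isSymm.neg_one_le_dotProduct_mulVec_of_nonneg (fun _ => E₇_quadForm_pos) hγ0 hβ0 hγ hβ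

theorem E₇_pairing_bounds {m : Fin 7 → ℤ} (hm0 : ∀ i, 0 ≤ m i) (hm : m ⬝ᵥ E₇ *ᵥ m = 2) :
    -1 ≤ m 0 + m 2 - m 3 ∧ -1 ≤ 2 * m 1 - m 3 ∧ -1 ≤ m 4 + m 6 - m 3 := by
  have h₁₃ := neg_one_le_E₇_pairing hm0 (γ := ![1, 0, 1, 0, 0, 0, 0]) (by decide) hm (by decide)
  have h₂ := neg_one_le_E₇_pairing hm0 (γ := ![0, 1, 0, 0, 0, 0, 0]) (by decide) hm (by decide)
  have h₅₆₇ := neg_one_le_E₇_pairing hm0 (γ := ![0, 0, 0, 0, 1, 1, 1]) (by decide) hm (by decide)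
  simp only [E₇, dotProduct, mulVec, Fin.sum_univ_seven, Int.reduceNeg, Fin.isValue,
    cons_val_zero, of_apply, cons_val', cons_val_fin_one, cons_val_one, zero_mul, add_zero,
    cons_val, neg_mul, one_mul, zero_add] at h₁₃ h₂ h₅₆₇
  omega

end CartanMatrix

theorem cartanE7_eq_map : cartanE7 = CartanMatrix.E₇.map (↑) := by
  ext i j
  fin_cases i <;> fin_cases j <;> simp [cartanE7, CartanMatrix.E₇]

theorem intCast_dotProduct_cartanE7_mulVec (m n : Fin 7 → ℤ) :
    (fun i => (m i : ℝ)) ⬝ᵥ cartanE7 *ᵥ (fun i => (n i : ℝ)) =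
      (m ⬝ᵥ CartanMatrix.E₇ *ᵥ n : ℤ) := by
  simp [cartanE7_eq_map, dotProduct, mulVec]

def e7Weight (s r₁ r₂ r₃ r₄ : ℝ) : Fin 7 → ℝ :=
  ![4 * s + r₁, 6 * s + r₄, 8 * s + r₁, 12 * s, 9 * s + r₂, 6 * s + r₂ + r₃, 3 * s + r₂]

theorem e7Weight_dotProduct_cartanE7_mulVec (s r₁ r₂ r₃ r₄ : ℝ) (x : Fin 7 → ℝ) :
    e7Weight s r₁ r₂ r₃ r₄ ⬝ᵥ cartanE7 *ᵥ x = s * x 3 + r₁ * (x 0 + x 2 - x 3)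
      + r₄ * (2 * x 1 - x 3) + r₂ * (x 4 + x 6 - x 3) + r₃ * (2 * x 5 - x 4 - x 6) := by
  simp only [dotProduct, e7Weight, mulVec, cartanE7, of_apply, cons_val', cons_val_fin_one,
    Fin.sum_univ_seven, Fin.isValue, cons_val_zero, cons_val_one, cons_val, zero_mul, add_zero,
    neg_mul, one_mul, zero_add]
  ring

theorem min_le_e7Weight_dotProduct_cartanE7_mulVec {s r₁ r₂ r₃ r₄ : ℝ} (hr₁ : 0 ≤ r₁)
    (hr₄ : 0 ≤ r₄) (hr₃ : 0 ≤ r₃) (hr₃₂ : r₃ ≤ r₂) (hr₃s : r₃ ≤ s) {m : Fin 7 → ℤ}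
    (hm0 : ∀ i, 0 ≤ m i) (hm : m ⬝ᵥ CartanMatrix.E₇ *ᵥ m = 2) :
    min 0 (s - (r₁ + r₂ + r₄)) ≤ e7Weight s r₁ r₂ r₃ r₄ ⬝ᵥ cartanE7 *ᵥ fun i => (m i : ℝ) := by
  obtain ⟨h₁₃, h₂, h₅₆₇⟩ := CartanMatrix.E₇_pairing_bounds hm0 hm
  have hm' (i) : (0 : ℝ) ≤ m i := by exact_mod_cast hm0 i
  rw [e7Weight_dotProduct_cartanE7_mulVec]
  rcases (hm0 3).eq_or_lt with h₃ | h₃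
  · have hm₃ : (m 3 : ℝ) = 0 := by exact_mod_cast h₃.symm
    refine min_le_left _ _ |>.trans ?_
    rw [hm₃]
    linarith [mul_nonneg hr₁ (add_nonneg (hm' 0) (hm' 2)), mul_nonneg hr₄ (hm' 1),
      mul_nonneg (sub_nonneg.2 hr₃₂) (add_nonneg (hm' 4) (hm' 6)), mul_nonneg hr₃ (hm' 5)]
  · refine min_le_right _ _ |>.trans ?_
    have h₁₃' : (-1 : ℝ) ≤ m 0 + m 2 - m 3 := by exact_mod_cast h₁₃
    have h₂' : (-1 : ℝ) ≤ 2 * m 1 - m 3 := by exact_mod_cast h₂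
    have h₅₆₇' : (-1 : ℝ) ≤ m 4 + m 6 - m 3 := by exact_mod_cast h₅₆₇
    have h₃' : (1 : ℝ) ≤ m 3 := by exact_mod_cast h₃
    linarith [mul_nonneg (sub_nonneg.2 hr₃s) (sub_nonneg.2 h₃'),
      mul_nonneg hr₁ (neg_le_iff_add_nonneg.1 h₁₃'), mul_nonneg hr₄ (neg_le_iff_add_nonneg.1 h₂'),
      mul_nonneg (sub_nonneg.2 hr₃₂) (neg_le_iff_add_nonneg.1 h₅₆₇'), mul_nonneg hr₃ (hm' 5)]

/-- For `E₇` (Bourbaki numbering), with `s ≥ 1/2`, `0 ≤ r₁ < 1/2`, `0 ≤ r₄ < 1/2`,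
`0 ≤ r₃ ≤ r₂ < 1/2`, and `c = (4s+r₁, 6s+r₄, 8s+r₁, 12s, 9s+r₂, 6s+r₂+r₃, 3s+r₂)`,
the pairing `cᵀ (A m)` is `> −1` for every positive root `m` (nonnegative integer vector
with `mᵀ A m = 2`), and for `m = e₄` it equals `s − (r₁ + r₂ + r₄)`. -/
theorem e7_case_pairing_bound (s r₁ r₂ r₃ r₄ : ℝ)
    (hs : 1 / 2 ≤ s)
    (hr₁ : 0 ≤ r₁) (hr₁' : r₁ < 1 / 2)
    (hr₄ : 0 ≤ r₄) (hr₄' : r₄ < 1 / 2)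
    (hr₃ : 0 ≤ r₃) (hr₃₂ : r₃ ≤ r₂) (hr₂' : r₂ < 1 / 2)
    (c : Fin 7 → ℝ)
    (hc : c = ![4 * s + r₁, 6 * s + r₄, 8 * s + r₁, 12 * s, 9 * s + r₂,
                6 * s + r₂ + r₃, 3 * s + r₂]) :
    (∀ m : Fin 7 → ℤ, (∀ i, 0 ≤ m i) →
      dotProduct (fun i => (m i : ℝ)) (cartanE7.mulVec fun i => (m i : ℝ)) = 2 →
      -1 < dotProduct c (cartanE7.mulVec fun i => (m i : ℝ))) ∧
    dotProduct c (cartanE7.mulVec (Pi.single 3 1)) = s - (r₁ + r₂ + r₄) := by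
  rw [show c = e7Weight s r₁ r₂ r₃ r₄ from hc]
  refine ⟨fun m hm0 hm => ?_, ?_⟩
  · have hm' : m ⬝ᵥ CartanMatrix.E₇ *ᵥ m = 2 := by
      exact_mod_cast (intCast_dotProduct_cartanE7_mulVec m m).symm.trans hm
    calc -1 < min 0 (s - (r₁ + r₂ + r₄)) := lt_min (by norm_num) (by linarith)
      _ ≤ _ := min_le_e7Weight_dotProduct_cartanE7_mulVec hr₁ hr₄ hr₃ hr₃₂ (by linarith) hm0 hm'
  · rw [e7Weight_dotProduct_cartanE7_mulVec]
    simp only [Fin.isValue, Pi.single_eq_same, mul_one, ne_eq, Fin.reduceEq, not_false_eq_true,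
      Pi.single_eq_of_ne, add_zero, zero_sub, mul_neg, mul_zero, sub_self]
    ring
end
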